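/- Let a, b, c be positive integers with a = b + c. Then the set F(0,(a),(b,c)) of factorisations of type (0,(a),(b,c)) has cardinality exactly a!. Equivalently, the number of tuples (σ₁, τ, σ₂, L₂) where σ₁ ∈ S_a is a single a-cycle, τ ∈ S_a is a transposition, σ₂ = τ·σ₁, and L₂ is a (b,c)-labeling of σ₂ (i.e. σ₂ has exactly two cycles, of lengths b and c, labeled accordingly) equals a!; in the double Hurwitz number normalization this says h₀((a),(b,c)) = |F(0,(a),(b,c))|/a! = 1. -/

import Mathlib

open Equiv

/-- `L` is a `μ`-labeling of the permutation `σ` of `{1,…,d}`. -/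
def IsLabeling (d m : ℕ) (μ : Fin m → ℕ) (σ : Equiv.Perm (Fin d)) (L : Fin d → Fin m) : Prop :=
  (∀ x, L (σ x) = L x) ∧
  (∀ i, (Finset.univ.filter fun x => L x = i).card = μ i) ∧
  (∀ (i : Fin m) (x y : Fin d), L x = i → L y = i → ∃ k : ℤ, (σ ^ k) x = y)

/-- The subgroup generated by `S` acts transitively on `{1,…,d}`. -/
def IsTransitiveOn (d : ℕ) (S : Set (Equiv.Perm (Fin d))) : Prop :=
  ∀ x y : Fin d, ∃ g ∈ Subgroup.closure S, g x = y

/-- A tuple `(σ₁, L₁, (τ₁,…,τ_b), σ₂, L₂)`. -/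
abbrev FactTuple (d m n b : ℕ) :=
  Equiv.Perm (Fin d) × (Fin d → Fin m) × (Fin b → Equiv.Perm (Fin d)) ×
    Equiv.Perm (Fin d) × (Fin d → Fin n)

/-- A factorisation of type `(g,μ,ν)`. -/
def IsFactorisation (d m n b : ℕ) (μ : Fin m → ℕ) (ν : Fin n → ℕ)
    (F : FactTuple d m n b) : Prop :=
  IsLabeling d m μ F.1 F.2.1 ∧
  IsLabeling d n ν F.2.2.2.1 F.2.2.2.2 ∧
  (∀ i, (F.2.2.1 i).IsSwap) ∧
  IsTransitiveOn d ({F.1, F.2.2.2.1} ∪ Set.range F.2.2.1) ∧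
  ((List.ofFn F.2.2.1).reverse).prod * F.1 = F.2.2.2.1

/-!
The symmetric group acts on factorisations by simultaneous conjugation, and the action is free
and transitive. Take as base point the rotation `σ₁ : x ↦ x + 1`, `τ = (0 b)` and `σ₂ = τ σ₁`,
whose cycles are `[0, b)` and `[b, a)`, labelled `0` and `1`.

In any factorisation `σ₁` is an `a`-cycle, and the endpoints of `τ` carry different labels:
otherwise the labeling would be `σ₁`-invariant as well, hence constant. Conjugating `σ₁` to the
rotation so that the endpoint labelled `0` goes to `0` turns `τ` into some `(0 j)`, and the cycles
`[0, j)`, `[j, a)` of `(0 j) σ₁` force `j = b` and the labeling of the base point. Freeness: a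
permutation conjugating the rotation to `σ₁` is determined by its value at `0`, which must again
be the endpoint of `τ` labelled `0`.
-/

namespace Equiv.Perm

variable {α β : Type*} {σ : Perm α}

theorem SameCycle.apply_eq_of_invariant {L : α → β} (hL : ∀ x, L (σ x) = L x) {x y : α}
    (h : SameCycle σ x y) : L x = L y := by
  suffices ∀ (k : ℤ) (x : α), L ((σ ^ k) x) = L x by
    obtain ⟨k, rfl⟩ := h
    exact (this k x).symm
  intro k
  induction k using Int.induction_on with
  | zero => intro x; rw [zpow_zero, one_apply]
  | succ k ih => intro x; rw [zpow_add_one, mul_apply, ih, hL]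
  | pred k ih =>
    intro x
    rw [zpow_sub_one, mul_apply, ih, ← hL (σ⁻¹ x), coe_inv, apply_symm_apply]

theorem apply_swap_eq_of_apply_eq [DecidableEq α] {L : α → β} {u v : α} (h : L u = L v)
    (x : α) : L (swap u v x) = L x := by
  rw [swap_apply_def]
  split_ifs <;> simp_all

theorem apply_ne_apply_of_swap_mul_eq [DecidableEq α] {σ₁ σ₂ : Perm α} {L : α → β} {u v : α}
    (hσ₁ : ∀ x y, SameCycle σ₁ x y) (hL : ∀ x, L (σ₂ x) = L x) (hprod : swap u v * σ₁ = σ₂)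
    (hLx : ∃ x y, L x ≠ L y) : L u ≠ L v := by
  intro huv
  obtain ⟨x, y, hxy⟩ := hLx
  have hσ₁σ₂ : σ₁ = swap u v * σ₂ := by rw [← hprod, swap_mul_self_mul]
  refine hxy ((hσ₁ x y).apply_eq_of_invariant fun z => ?_)
  rw [hσ₁σ₂, mul_apply, apply_swap_eq_of_apply_eq huv, hL]

theorem IsSwap.exists_eq_swap_label_zero_one [DecidableEq α] {τ σ₁ σ₂ : Perm α}
    {L : α → Fin 2} (hτ : τ.IsSwap) (hσ₁ : ∀ x y, SameCycle σ₁ x y)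
    (hL : ∀ x, L (σ₂ x) = L x) (hLsurj : Function.Surjective L) (hprod : τ * σ₁ = σ₂) :
    ∃ u v, τ = swap u v ∧ L u = 0 ∧ L v = 1 := by
  obtain ⟨u, v, -, rfl⟩ := hτ
  obtain ⟨x, hx⟩ := hLsurj 0
  obtain ⟨y, hy⟩ := hLsurj 1
  have hne := apply_ne_apply_of_swap_mul_eq hσ₁ hL hprod ⟨x, y, by rw [hx, hy]; decide⟩
  have key : ∀ p q : Fin 2, p ≠ q → p = 0 ∧ q = 1 ∨ p = 1 ∧ q = 0 := by decide
  rcases key _ _ hne with ⟨h0, h1⟩ | ⟨h1, h0⟩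
  · exact ⟨u, v, rfl, h0, h1⟩
  · exact ⟨v, u, swap_comm _ _, h0, h1⟩

theorem eq_of_conj_eq_of_apply_eq (hσ : ∀ x y, SameCycle σ x y) {π π' : Perm α}
    (h : π * σ * π⁻¹ = π' * σ * π'⁻¹) {x : α} (hx : π x = π' x) : π = π' := by
  ext y
  obtain ⟨k, rfl⟩ := hσ x y
  have hk := congrArg (fun g => (g ^ k) (π x)) h
  simp only [conj_zpow, mul_apply, coe_inv, symm_apply_apply] at hk
  rwa [hx, symm_apply_apply] at hk

section Nontrivial

variable [Nontrivial α]

theorem apply_ne_self_of_forall_sameCycle (hσ : ∀ x y, SameCycle σ x y) (x : α) : σ x ≠ x := by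
  intro hx
  obtain ⟨y, hy⟩ := exists_ne x
  exact hy ((hσ x y).eq_of_left hx).symm

theorem isCycle_of_forall_sameCycle (hσ : ∀ x y, SameCycle σ x y) : σ.IsCycle := by
  obtain ⟨x⟩ := ‹Nontrivial α›.to_nonempty
  exact ⟨x, apply_ne_self_of_forall_sameCycle hσ x, fun y _ => hσ x y⟩

variable [Fintype α] [DecidableEq α]

theorem support_eq_univ_of_forall_sameCycle (hσ : ∀ x y, SameCycle σ x y) :
    σ.support = Finset.univ :=
  Finset.eq_univ_of_forall fun x => mem_support.mpr (apply_ne_self_of_forall_sameCycle hσ x)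

theorem exists_conj_eq_and_apply_eq {σ' : Perm α} (hσ : ∀ x y, SameCycle σ x y)
    (hσ' : ∀ x y, SameCycle σ' x y) (x x' : α) : ∃ π : Perm α, π * σ * π⁻¹ = σ' ∧ π x = x' := by
  obtain ⟨π₀, hπ₀⟩ := isConj_iff.mp <|
    (isCycle_of_forall_sameCycle hσ).isConj (isCycle_of_forall_sameCycle hσ') <| by
      rw [support_eq_univ_of_forall_sameCycle hσ, support_eq_univ_of_forall_sameCycle hσ']
  obtain ⟨k, hk⟩ := hσ x (π₀⁻¹ x')
  refine ⟨π₀ * σ ^ k, ?_, ?_⟩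
  · rw [← hπ₀]
    group
  · rw [mul_apply, hk]
    simp

end Nontrivial

end Equiv.Perm

section Conjugation

open Equiv.Perm

variable {d m n b : ℕ}

def FactTuple.conj (π : Perm (Fin d)) (F : FactTuple d m n b) : FactTuple d m n b :=
  (π * F.1 * π⁻¹, F.2.1 ∘ ⇑π⁻¹, fun i => π * F.2.2.1 i * π⁻¹, π * F.2.2.2.1 * π⁻¹,
    F.2.2.2.2 ∘ ⇑π⁻¹)

theorem IsLabeling.surjective {μ : Fin m → ℕ} {σ : Perm (Fin d)} {L : Fin d → Fin m}
    (h : IsLabeling d m μ σ L) (hμ : ∀ i, 0 < μ i) : Function.Surjective L := fun i => by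
  obtain ⟨x, hx⟩ := Finset.card_pos.mp ((h.2.1 i).symm ▸ hμ i)
  exact ⟨x, (Finset.mem_filter.mp hx).2⟩

theorem IsLabeling.conj {μ : Fin m → ℕ} {σ : Perm (Fin d)} {L : Fin d → Fin m}
    (h : IsLabeling d m μ σ L) (π : Perm (Fin d)) :
    IsLabeling d m μ (π * σ * π⁻¹) (L ∘ ⇑π⁻¹) := by
  obtain ⟨hinv, hcard, hcyc⟩ := h
  refine ⟨fun x => ?_, fun i => ?_, fun i x y hx hy => ?_⟩
  · simp [hinv]
  · rw [← hcard i]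
    exact Finset.card_equiv π⁻¹ (by simp)
  · exact sameCycle_conj.mpr (hcyc i _ _ hx hy)

theorem IsTransitiveOn.of_conj_mem {S T : Set (Perm (Fin d))} (h : IsTransitiveOn d S)
    (π : Perm (Fin d)) (hST : ∀ g ∈ S, π * g * π⁻¹ ∈ T) : IsTransitiveOn d T := by
  intro x y
  obtain ⟨g, hg, hgxy⟩ := h (π⁻¹ x) (π⁻¹ y)
  have hle : Subgroup.closure S ≤ (Subgroup.closure T).comap (MulAut.conj π).toMonoidHom :=
    Subgroup.closure_le _ |>.mpr fun g hg => Subgroup.subset_closure (hST g hg)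
  exact ⟨π * g * π⁻¹, hle hg, by simp only [mul_apply]; rw [hgxy]; simp⟩

theorem IsFactorisation.conj {μ : Fin m → ℕ} {ν : Fin n → ℕ} {F : FactTuple d m n b}
    (hF : IsFactorisation d m n b μ ν F) (π : Perm (Fin d)) :
    IsFactorisation d m n b μ ν (F.conj π) := by
  obtain ⟨hL₁, hL₂, hswap, htrans, hprod⟩ := hF
  refine ⟨hL₁.conj π, hL₂.conj π, fun i => ?_, htrans.of_conj_mem π ?_, ?_⟩
  · obtain ⟨x, y, hxy, hτ⟩ := hswap i
    exact ⟨π x, π y, π.injective.ne hxy, by simp [FactTuple.conj, hτ, swap_apply_apply]⟩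
  · rintro g ((rfl | rfl) | ⟨i, rfl⟩)
    · exact Or.inl (Or.inl rfl)
    · exact Or.inl (Or.inr rfl)
    · exact Or.inr ⟨i, rfl⟩
  · have hmap : (List.ofFn (F.conj π).2.2.1).reverse.prod =
        MulAut.conj π (List.ofFn F.2.2.1).reverse.prod := by
      rw [map_list_prod, List.map_reverse, List.map_ofFn]
      rfl
    change _ * (π * F.1 * π⁻¹) = π * F.2.2.2.1 * π⁻¹
    rw [hmap, MulAut.conj_apply, ← hprod]
    group

end Conjugation

section CyclesOnFin

open Equiv.Perm

variable {a : ℕ}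

theorem val_pow_apply_of_step {σ : Perm (Fin a)} {lo hi : ℕ}
    (hstep : ∀ x : Fin a, lo ≤ x.val → x.val + 1 < hi → (σ x).val = x.val + 1)
    {x : Fin a} (hx : lo ≤ x.val) : ∀ k : ℕ, x.val + k < hi → ((σ ^ k) x).val = x.val + k
  | 0, _ => rfl
  | k + 1, hk => by
    have ih := val_pow_apply_of_step hstep hx k (by omega)
    rw [pow_succ', mul_apply, hstep _ (by omega) (by omega), ih, add_assoc]

theorem sameCycle_of_step {σ : Perm (Fin a)} {lo hi : ℕ}
    (hstep : ∀ x : Fin a, lo ≤ x.val → x.val + 1 < hi → (σ x).val = x.val + 1)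
    {x y : Fin a} (hx : lo ≤ x.val) (hy : lo ≤ y.val) (hx' : x.val < hi) (hy' : y.val < hi) :
    SameCycle σ x y := by
  wlog hxy : x ≤ y generalizing x y
  · exact (this hy hx hy' hx' (le_of_not_ge hxy)).symm
  refine ⟨(y.val - x.val : ℕ), Fin.ext ?_⟩
  rw [zpow_natCast, val_pow_apply_of_step hstep hx _ (by omega)]
  exact Nat.add_sub_of_le hxy

def segmentLabel (j : ℕ) (x : Fin a) : Fin 2 := if x.val < j then 0 else 1

theorem segmentLabel_eq_zero_iff {j : ℕ} {x : Fin a} : segmentLabel j x = 0 ↔ x.val < j := by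
  simp [segmentLabel]

theorem segmentLabel_eq_one_iff {j : ℕ} {x : Fin a} : segmentLabel j x = 1 ↔ j ≤ x.val := by
  simp [segmentLabel]

theorem card_segmentLabel_eq_zero {j : ℕ} (hj : j ≤ a) :
    (Finset.univ.filter fun x : Fin a => segmentLabel j x = 0).card = j := by
  simp [segmentLabel_eq_zero_iff, Fin.card_filter_val_lt, hj]

theorem card_segmentLabel_eq_one {j : ℕ} (hj : j ≤ a) :
    (Finset.univ.filter fun x : Fin a => segmentLabel j x = 1).card = a - j := by
  have h := Finset.card_filter_add_card_filter_not (s := Finset.univ) fun x : Fin a => x.val < j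
  simp only [not_lt, Fin.card_filter_val_lt, Finset.card_univ, Fintype.card_fin] at h
  simp only [segmentLabel_eq_one_iff]
  omega

variable [NeZero a]

theorem val_finRotate (x : Fin a) :
    (finRotate a x).val = if x.val + 1 = a then 0 else x.val + 1 := by
  obtain ⟨n, rfl⟩ : ∃ n, a = n + 1 := ⟨a - 1, (Nat.sub_add_cancel (NeZero.pos a)).symm⟩
  rw [coe_finRotate]
  simp [Fin.ext_iff]

theorem sameCycle_finRotate (x y : Fin a) : SameCycle (finRotate a) x y :=
  sameCycle_of_step (lo := 0) (hi := a) (fun x _ h => by rw [val_finRotate, if_neg h.ne])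
    x.val.zero_le y.val.zero_le x.isLt y.isLt

def splitCycle (j : Fin a) : Perm (Fin a) := swap 0 j * finRotate a

theorem val_splitCycle (j x : Fin a) : (splitCycle j x).val =
    if x.val + 1 = j.val then 0 else if x.val + 1 = a then j.val else x.val + 1 := by
  have hj := j.isLt
  have hrot := val_finRotate x
  rw [splitCycle, mul_apply, swap_apply_def]
  by_cases ha : x.val + 1 = a
  · have h0 : finRotate a x = 0 := Fin.ext (by rw [hrot, if_pos ha]; rfl)
    simp [h0, ha, hj.ne']
  · rw [if_neg ha] at hrot
    have h0 : finRotate a x ≠ 0 := fun h => by simp [h] at hrot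
    simp only [h0, if_false, Fin.ext_iff, hrot, ha]
    split_ifs <;> simp_all

theorem splitCycle_sameCycle_of_lt (j : Fin a) {x y : Fin a} (hx : x.val < j.val)
    (hy : y.val < j.val) : SameCycle (splitCycle j) x y :=
  sameCycle_of_step (lo := 0) (hi := j.val)
    (fun z _ hz => by rw [val_splitCycle, if_neg hz.ne, if_neg (by omega)])
    x.val.zero_le y.val.zero_le hx hy

theorem splitCycle_sameCycle_of_ge (j : Fin a) {x y : Fin a} (hx : j.val ≤ x.val)
    (hy : j.val ≤ y.val) : SameCycle (splitCycle j) x y :=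
  sameCycle_of_step (lo := j.val) (hi := a)
    (fun z hz hz' => by rw [val_splitCycle, if_neg (by omega), if_neg hz'.ne])
    hx hy x.isLt y.isLt

theorem segmentLabel_splitCycle (j x : Fin a) :
    segmentLabel j.val (splitCycle j x) = segmentLabel j.val x := by
  have := x.isLt
  have := j.isLt
  simp only [segmentLabel, val_splitCycle]
  split_ifs <;> first | rfl | omega

theorem eq_segmentLabel_of_invariant (j : Fin a) {L : Fin a → Fin 2}
    (hL : ∀ x, L (splitCycle j x) = L x) (h0 : L 0 = 0) (hj : L j = 1) :
    L = segmentLabel j.val := by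
  funext x
  rw [segmentLabel]
  split_ifs with hx
  · rw [← h0]
    exact (splitCycle_sameCycle_of_lt j (x := 0) (by rw [Fin.val_zero]; omega) hx
      |>.apply_eq_of_invariant hL).symm
  · rw [← hj]
    exact (splitCycle_sameCycle_of_ge j le_rfl (not_lt.mp hx) |>.apply_eq_of_invariant hL).symm

def modelFactorisation (j : Fin a) : FactTuple a 1 2 1 :=
  (finRotate a, 0, fun _ => swap 0 j, splitCycle j, segmentLabel j.val)

theorem isLabeling_finRotate : IsLabeling a 1 (fun _ => a) (finRotate a) 0 :=
  ⟨fun _ => rfl, fun i => by simp [Subsingleton.elim i 0], fun _ x y _ _ => sameCycle_finRotate x y⟩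

theorem isLabeling_splitCycle {b c : ℕ} (habc : a = b + c) (j : Fin a) (hj : j.val = b) :
    IsLabeling a 2 ![b, c] (splitCycle j) (segmentLabel b) := by
  subst hj
  refine ⟨segmentLabel_splitCycle j, fun i => ?_, fun i x y hx hy => ?_⟩
  · fin_cases i
    · exact card_segmentLabel_eq_zero j.isLt.le
    · simp only [Fin.mk_one, Matrix.cons_val_one, Matrix.cons_val_zero]
      rw [card_segmentLabel_eq_one j.isLt.le]
      omega
  · fin_cases i
    · exact splitCycle_sameCycle_of_lt j (segmentLabel_eq_zero_iff.mp hx)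
        (segmentLabel_eq_zero_iff.mp hy)
    · exact splitCycle_sameCycle_of_ge j (segmentLabel_eq_one_iff.mp hx)
        (segmentLabel_eq_one_iff.mp hy)

theorem isFactorisation_modelFactorisation {b c : ℕ} (hb : 0 < b) (habc : a = b + c)
    (j : Fin a) (hj : j.val = b) :
    IsFactorisation a 1 2 1 (fun _ => a) ![b, c] (modelFactorisation j) := by
  refine ⟨isLabeling_finRotate, hj ▸ isLabeling_splitCycle habc j hj, fun _ => ?_,
    fun x y => ?_, ?_⟩
  · exact ⟨0, j, fun h => by rw [← h, Fin.val_zero] at hj; omega, rfl⟩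
  · obtain ⟨k, hk⟩ := sameCycle_finRotate x y
    exact ⟨finRotate a ^ k, zpow_mem (Subgroup.subset_closure (by simp [modelFactorisation])) k, hk⟩
  · simp [modelFactorisation, splitCycle]

theorem conj_modelFactorisation_injective (j : Fin a) (hj : j ≠ 0) :
    Function.Injective fun π : Perm (Fin a) => (modelFactorisation j).conj π := by
  intro π π' h
  have hσ : π * finRotate a * π⁻¹ = π' * finRotate a * π'⁻¹ := congrArg Prod.fst h
  have hτ : swap (π 0) (π j) = swap (π' 0) (π' j) := by
    have := congrFun (congrArg (fun F : FactTuple a 1 2 1 => F.2.2.1) h) 0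
    simpa [FactTuple.conj, modelFactorisation, swap_apply_apply] using this
  have hL : segmentLabel j.val ∘ ⇑π⁻¹ = segmentLabel j.val ∘ ⇑π'⁻¹ :=
    congrArg (fun F : FactTuple a 1 2 1 => F.2.2.2.2) h
  have hmem : π' 0 = π 0 ∨ π' 0 = π j := by
    have hne : swap (π 0) (π j) (π' 0) ≠ π' 0 := by
      rw [hτ, swap_apply_left]
      exact π'.injective.ne hj
    exact (swap_apply_ne_self_iff.mp hne).2
  refine eq_of_conj_eq_of_apply_eq sameCycle_finRotate hσ (x := 0) ?_
  refine (hmem.resolve_right fun hj' => ?_).symm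
  have hlabel := congrFun hL (π' 0)
  simp only [Function.comp_apply, coe_inv, symm_apply_apply] at hlabel
  rw [hj', symm_apply_apply] at hlabel
  rw [segmentLabel_eq_one_iff.mpr le_rfl, segmentLabel_eq_zero_iff.mpr
    (by rw [Fin.val_zero]; exact Fin.pos_iff_ne_zero.mpr hj)] at hlabel
  exact one_ne_zero hlabel

theorem exists_conj_modelFactorisation_eq {b c : ℕ} (hb : 0 < b) (hc : 0 < c) (habc : a = b + c)
    (j : Fin a) (hj : j.val = b) {F : FactTuple a 1 2 1}
    (hF : IsFactorisation a 1 2 1 (fun _ => a) ![b, c] F) :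
    ∃ π : Perm (Fin a), (modelFactorisation j).conj π = F := by
  obtain ⟨σ₁, L₁, T, σ₂, L₂⟩ := F
  obtain ⟨⟨-, -, hσ₁⟩, hL₂, hswap, -, hprod⟩ := hF
  dsimp only at hσ₁ hL₂ hswap hprod
  have hfull : ∀ x y, SameCycle σ₁ x y :=
    fun x y => hσ₁ 0 x y (Subsingleton.elim _ _) (Subsingleton.elim _ _)
  have hprod₀ : T 0 * σ₁ = σ₂ := by simpa using hprod
  obtain ⟨u, v, hτ, hu, hv⟩ := (hswap 0).exists_eq_swap_label_zero_one hfull hL₂.1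
    (hL₂.surjective fun i => by fin_cases i <;> simpa) hprod₀
  have : Nontrivial (Fin a) := Fin.nontrivial_iff_two_le.mpr (by omega)
  obtain ⟨π, hπσ, hπ0⟩ := exists_conj_eq_and_apply_eq sameCycle_finRotate hfull 0 u
  set w := π⁻¹ v with hw
  have hπw : π w = v := by simp [hw]
  have hσ₂ : σ₂ = π * splitCycle w * π⁻¹ := by
    rw [← hprod₀, hτ, ← hπσ, ← hπ0, ← hπw, swap_apply_apply, splitCycle]
    group
  have hlabel : L₂ ∘ π = segmentLabel w.val :=
    eq_segmentLabel_of_invariant w (fun x => by simp [hσ₂, ← hL₂.1 (π x)]) (by simp [hπ0, hu])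
      (by simp [hπw, hv])
  have hwj : w = j := Fin.ext <| by
    calc w.val = (Finset.univ.filter fun x => segmentLabel w.val x = 0).card :=
          (card_segmentLabel_eq_zero w.isLt.le).symm
      _ = (Finset.univ.filter fun x => L₂ (π x) = 0).card := by rw [← hlabel]; rfl
      _ = (Finset.univ.filter fun x => L₂ x = 0).card := Finset.card_equiv π (by simp)
      _ = j.val := (hL₂.2.1 0).trans hj.symm
  subst hwj
  refine ⟨π, Prod.ext hπσ (Prod.ext (funext fun _ => Subsingleton.elim _ _)
    (Prod.ext (funext fun i => ?_) (Prod.ext hσ₂.symm ?_)))⟩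
  · simp [modelFactorisation, FactTuple.conj, Subsingleton.elim i 0, hτ, ← swap_apply_apply,
      hπ0, hπw]
  · ext x
    simp [modelFactorisation, FactTuple.conj, ← hlabel]

end CyclesOnFin

theorem stmt8_general (a b c : ℕ) (hb : 0 < b) (hc : 0 < c) (habc : a = b + c) :
    Nat.card {F : FactTuple a 1 2 1 //
        IsFactorisation a 1 2 1 (fun _ => a) ![b, c] F} = Nat.factorial a := by
  have : NeZero a := ⟨by omega⟩
  let j : Fin a := ⟨b, by omega⟩
  have hj0 : j ≠ 0 := fun h => hb.ne' (congrArg Fin.val h)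
  have hmodel := isFactorisation_modelFactorisation hb habc j rfl
  let e : Perm (Fin a) → {F // IsFactorisation a 1 2 1 (fun _ => a) ![b, c] F} :=
    fun π => ⟨(modelFactorisation j).conj π, hmodel.conj π⟩
  have he : Function.Bijective e :=
    ⟨fun π π' h => conj_modelFactorisation_injective j hj0 (congrArg Subtype.val h),
      fun ⟨_, hF⟩ => (exists_conj_modelFactorisation_eq hb hc habc j rfl hF).imp
        fun _ hπ => Subtype.ext hπ⟩
  rw [← Nat.card_eq_of_bijective e he, Nat.card_perm, Nat.card_eq_fintype_card, Fintype.card_fin]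

/-- for positive integers `a = b + c`, the set of factorisations of
type `(0,(a),(b,c))` (so with `m = 1`, `n = 2` and one transposition, since
`2·0 − 2 + 1 + 2 = 1`) has cardinality exactly `a!`; i.e. `h₀((a),(b,c)) = 1`. -/
theorem stmt8 (a b c : ℕ) (ha : 0 < a) (hb : 0 < b) (hc : 0 < c) (habc : a = b + c) :
    Nat.card {F : FactTuple a 1 2 1 //
        IsFactorisation a 1 2 1 (fun _ => a) ![b, c] F} = Nat.factorial a :=
  stmt8_general a b c hb hc habc
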